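/- If the true kernel value is 1 at τ = 0 (i.e., ∑_{k=0}^∞ q_k² = 1 in each dimension) and all coefficients q_k² ≥ 0, then for every τ ∈ ℝ^D, the full multivariate tensor-product kernel κ(τ) = ∏_{d=1}^D ∑_{k=0}^∞ q_k² cos(ω_d k τ_d) and its truncation κ_R(τ) at refinement R satisfy |κ(τ) − κ_R(τ)| ≤ 2(1 − s_R^D), where s_R = ∑_{r=0}^{R−1} q_r². -/
import Mathlib


open Finset

lemma abs_tsum_le_tsum_abs' {ι : Type*} (f : ι → ℝ) (h : Summable fun i => |f i|) :
    |∑' i, f i| ≤ ∑' i, |f i| := by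
  simpa [Real.norm_eq_abs] using
    norm_tsum_le_tsum_norm (f := f) (by simpa [Real.norm_eq_abs] using h)

lemma prod_diff_bound_aux {ι : Type*} [DecidableEq ι] (t : Finset ι) (f g : ι → ℝ) (s : ℝ)
    (hs0 : 0 ≤ s) (hs1 : s ≤ 1) (hf : ∀ i, |f i| ≤ 1) (hg : ∀ i, |g i| ≤ s)
    (hfg : ∀ i, |f i - g i| ≤ 1 - s) :
    |∏ i ∈ t, f i - ∏ i ∈ t, g i| ≤ 1 - s ^ t.card := by
  induction t using Finset.induction_on with
  | empty => simp
  | @insert a t ha ih =>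
    rw [Finset.prod_insert ha, Finset.prod_insert ha, Finset.card_insert_of_notMem ha]
    set P := ∏ i ∈ t, f i
    set Q := ∏ i ∈ t, g i
    have hQ : |Q| ≤ s ^ t.card := by
      rw [Finset.abs_prod]
      calc ∏ i ∈ t, |g i| ≤ ∏ i ∈ t, s :=
            Finset.prod_le_prod (fun i _ => abs_nonneg _) (fun i _ => hg i)
        _ = s ^ t.card := Finset.prod_const s
    have key : f a * P - g a * Q = f a * (P - Q) + (f a - g a) * Q := by ring
    rw [key]
    have hA : |f a| * |P - Q| ≤ 1 * (1 - s ^ t.card) :=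
      mul_le_mul (hf a) ih (abs_nonneg _) zero_le_one
    have hB : |f a - g a| * |Q| ≤ (1 - s) * s ^ t.card :=
      mul_le_mul (hfg a) hQ (abs_nonneg _) (by linarith)
    calc |f a * (P - Q) + (f a - g a) * Q| ≤ |f a * (P - Q)| + |(f a - g a) * Q| :=
          abs_add_le _ _
      _ = |f a| * |P - Q| + |f a - g a| * |Q| := by rw [abs_mul, abs_mul]
      _ ≤ 1 * (1 - s ^ t.card) + (1 - s) * s ^ t.card := add_le_add hA hB
      _ = 1 - s ^ (t.card + 1) := by ring

theorem multivariate_truncation_error_bound (q : ℕ → ℝ) (hq : ∀ k, 0 ≤ q k)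
    (hs : HasSum (fun k => (q k)^2) 1) (D : ℕ) (hD : 1 ≤ D)
    (ω τ : Fin D → ℝ) (R : ℕ) :
    |(∏ d, ∑' k : ℕ, (q k)^2 * Real.cos (ω d * k * τ d)) -
      ∏ d, ∑ r ∈ Finset.range R, (q r)^2 * Real.cos (ω d * r * τ d)|
      ≤ 2 * (1 - (∑ r ∈ Finset.range R, (q r)^2)^D) := by
  set s := ∑ r ∈ Finset.range R, (q r)^2 with hsdef
  have hq2 : ∀ k, 0 ≤ (q k)^2 := fun k => sq_nonneg _
  have hs0 : 0 ≤ s := Finset.sum_nonneg fun i _ => hq2 i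
  have hsum : Summable (fun k => (q k)^2) := hs.summable
  have hs1 : s ≤ 1 := by
    have := Summable.sum_le_tsum (Finset.range R) (fun i _ => hq2 i) hsum
    rwa [hs.tsum_eq] at this
  have habs : ∀ d k, |(q k)^2 * Real.cos (ω d * k * τ d)| ≤ (q k)^2 := by
    intro d k
    rw [abs_mul, abs_of_nonneg (hq2 k)]
    calc (q k)^2 * |Real.cos (ω d * k * τ d)| ≤ (q k)^2 * 1 := by
          gcongr; exact Real.abs_cos_le_one _
      _ = (q k)^2 := mul_one _
  have hsum2 : ∀ d, Summable (fun k => (q k)^2 * Real.cos (ω d * k * τ d)) := by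
    intro d
    refine Summable.of_abs (hsum.of_nonneg_of_le (fun k => abs_nonneg _) ?_)
    exact habs d
  set f : Fin D → ℝ := fun d => ∑' k : ℕ, (q k)^2 * Real.cos (ω d * k * τ d) with hfdef
  set g : Fin D → ℝ := fun d => ∑ r ∈ Finset.range R, (q r)^2 * Real.cos (ω d * r * τ d)
    with hgdef
  have hf : ∀ d, |f d| ≤ 1 := by
    intro d
    have h1 : |f d| ≤ ∑' k, |(q k)^2 * Real.cos (ω d * k * τ d)| :=
      abs_tsum_le_tsum_abs' _ (hsum2 d).abs
    have h2 : (∑' k, |(q k)^2 * Real.cos (ω d * k * τ d)|) ≤ ∑' k, (q k)^2 :=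
      Summable.tsum_le_tsum (habs d) ((hsum2 d).abs) hsum
    rw [hs.tsum_eq] at h2
    exact h1.trans h2
  have hg : ∀ d, |g d| ≤ s := by
    intro d
    calc |g d| ≤ ∑ r ∈ Finset.range R, |(q r)^2 * Real.cos (ω d * r * τ d)| :=
          Finset.abs_sum_le_sum_abs _ _
      _ ≤ s := Finset.sum_le_sum fun r _ => habs d r
  have hqcompl : (∑' k : ↑((Finset.range R : Finset ℕ) : Set ℕ)ᶜ, (q (k : ℕ))^2) = 1 - s := by
    have h := Summable.sum_add_tsum_compl (s := Finset.range R) hsum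
    have h2 := hs.tsum_eq
    linarith [hsdef]
  have hfg : ∀ d, |f d - g d| ≤ 1 - s := by
    intro d
    have h := Summable.sum_add_tsum_compl (s := Finset.range R) (hsum2 d)
    have heq : f d - g d = ∑' k : ↑((Finset.range R : Finset ℕ) : Set ℕ)ᶜ,
        (q (k : ℕ))^2 * Real.cos (ω d * (k : ℕ) * τ d) := by
      rw [hfdef, hgdef]; dsimp only; linarith
    rw [heq]
    have h1 : |∑' k : ↑((Finset.range R : Finset ℕ) : Set ℕ)ᶜ,
        (q (k : ℕ))^2 * Real.cos (ω d * (k : ℕ) * τ d)| ≤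
        ∑' k : ↑((Finset.range R : Finset ℕ) : Set ℕ)ᶜ,
          |(q (k : ℕ))^2 * Real.cos (ω d * (k : ℕ) * τ d)| :=
      abs_tsum_le_tsum_abs' _ ((hsum2 d).subtype _).abs
    have h2 : (∑' k : ↑((Finset.range R : Finset ℕ) : Set ℕ)ᶜ,
        |(q (k : ℕ))^2 * Real.cos (ω d * (k : ℕ) * τ d)|) ≤
        ∑' k : ↑((Finset.range R : Finset ℕ) : Set ℕ)ᶜ, (q (k : ℕ))^2 :=
      Summable.tsum_le_tsum (fun k => habs d k) (((hsum2 d).subtype _).abs) (hsum.subtype _)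
    rw [hqcompl] at h2
    exact h1.trans h2
  have main : |(∏ d, f d) - ∏ d, g d| ≤ 1 - s ^ D := by
    have := prod_diff_bound_aux (Finset.univ : Finset (Fin D)) f g s hs0 hs1 hf hg hfg
    rwa [Finset.card_univ, Fintype.card_fin] at this
  have hpow : s ^ D ≤ 1 := pow_le_one₀ hs0 hs1
  calc |(∏ d, f d) - ∏ d, g d| ≤ 1 - s ^ D := main
    _ ≤ 2 * (1 - s ^ D) := by linarith
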